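/- arXiv:1807.06304 — 3 statements merged into one kernel-verified Lean document; each statement's English description precedes it below -/
import Mathlib

section
/- Let h(x) = Σ_{k ∈ K} h_k e^{i⟨k,ω⟩x} be a finite trigonometric sum with K ⊆ ℤ^d \ {0} symmetric (k ∈ K ⟺ -k ∈ K) and e^{i⟨k,ω⟩α} ≠ 1 for all k ∈ K. Suppose h satisfies h(-x-α) = h(x) for all x, equivalently h_k = h_{-k} e^{i⟨k,ω⟩α} for all k ∈ K. Then the solution l(x) = Σ_{k ∈ K} (h_k/(e^{i⟨k,ω⟩α}-1)) e^{i⟨k,ω⟩x} of the difference equation l(x+α)-l(x)=h(x) is odd: l(-x) = -l(x) for all x ∈ ℝ. -/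
/-! Reindexing by `k ↦ -k` turns `l (-x)` into `∑ h_{-k} / (e^{-iθ_k α} - 1) e^{iθ_k x}` with
`θ_k = ⟨k, ω⟩`, and the symmetry `h_{-k} = h_k e^{-iθ_k α}` turns each coefficient into
`h_k / (1 - e^{iθ_k α})`, the negative of the original one. -/

open Complex

theorem mul_inv_div_inv_sub_one {F : Type*} [Field F] {z : F} (hz : z ≠ 0) (c : F) :
    c * z⁻¹ / (z⁻¹ - 1) = -(c / (z - 1)) := by
  rw [show z⁻¹ - 1 = (1 - z) * z⁻¹ by field_simp, mul_div_mul_right c _ (inv_ne_zero hz),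
    ← neg_sub, div_neg]

theorem sum_div_exp_sub_one_mul_exp_neg {ι : Type*} [InvolutiveNeg ι] (K : Finset ι)
    (hK : ∀ k, k ∈ K ↔ -k ∈ K) (θ : ι → ℝ) (hθ : ∀ k, θ (-k) = -θ k) (c : ι → ℂ) (α : ℝ)
    (hc : ∀ k ∈ K, c k = c (-k) * exp (I * θ k * α)) (x : ℝ) :
    ∑ k ∈ K, c k / (exp (I * θ k * α) - 1) * exp (I * θ k * (-x : ℝ)) =
      -∑ k ∈ K, c k / (exp (I * θ k * α) - 1) * exp (I * θ k * x) := by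
  rw [← Finset.sum_neg_distrib]
  refine Finset.sum_equiv (Equiv.neg ι) hK fun k hk => ?_
  have hα : exp (I * θ (-k) * α) = (exp (I * θ k * α))⁻¹ := by
    rw [hθ, ← exp_neg]; push_cast; ring_nf
  have hx : exp (I * θ (-k) * x) = exp (I * θ k * (-x : ℝ)) := by
    rw [hθ]; push_cast; ring_nf
  have hc_neg : c (-k) = c k * (exp (I * θ k * α))⁻¹ := by
    rw [hc (-k) ((hK k).mp hk), neg_neg, hα]
  rw [Equiv.neg_apply, hα, hx, hc_neg, mul_inv_div_inv_sub_one (exp_ne_zero _), neg_mul, neg_neg]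

theorem stmt_3_general (d : ℕ) (ω : Fin d → ℝ) (α : ℝ) (K : Finset (Fin d → ℤ))
    (hc : (Fin d → ℤ) → ℂ)
    (hKsym : ∀ k, k ∈ K ↔ -k ∈ K)
    (hsym : ∀ k ∈ K, hc k =
      hc (-k) * Complex.exp (Complex.I * ((∑ i, (k i : ℝ) * ω i : ℝ) : ℂ) * (α : ℂ)))
    (l : ℝ → ℂ)
    (hl : ∀ x : ℝ, l x = ∑ k ∈ K,
      hc k / (Complex.exp (Complex.I * ((∑ i, (k i : ℝ) * ω i : ℝ) : ℂ) * (α : ℂ)) - 1)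
        * Complex.exp (Complex.I * ((∑ i, (k i : ℝ) * ω i : ℝ) : ℂ) * (x : ℂ))) :
    ∀ x : ℝ, l (-x) = -l x := by
  intro x
  have hfreq_neg : ∀ k : Fin d → ℤ, ∑ i, ((-k) i : ℝ) * ω i = -∑ i, (k i : ℝ) * ω i := by
    simp [Finset.sum_neg_distrib]
  rw [hl, hl]
  exact sum_div_exp_sub_one_mul_exp_neg K hKsym _ hfreq_neg hc α hsym x

theorem stmt_3 (d : ℕ) (ω : Fin d → ℝ) (α : ℝ) (K : Finset (Fin d → ℤ))
    (hc : (Fin d → ℤ) → ℂ)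
    (hK0 : ∀ k ∈ K, k ≠ 0)
    (hKsym : ∀ k, k ∈ K ↔ -k ∈ K)
    (hnr : ∀ k ∈ K,
      Complex.exp (Complex.I * ((∑ i, (k i : ℝ) * ω i : ℝ) : ℂ) * (α : ℂ)) ≠ 1)
    (hsym : ∀ k ∈ K, hc k =
      hc (-k) * Complex.exp (Complex.I * ((∑ i, (k i : ℝ) * ω i : ℝ) : ℂ) * (α : ℂ)))
    (l : ℝ → ℂ)
    (hl : ∀ x : ℝ, l x = ∑ k ∈ K,
      hc k / (Complex.exp (Complex.I * ((∑ i, (k i : ℝ) * ω i : ℝ) : ℂ) * (α : ℂ)) - 1)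
        * Complex.exp (Complex.I * ((∑ i, (k i : ℝ) * ω i : ℝ) : ℂ) * (x : ℂ))) :
    ∀ x : ℝ, l (-x) = -l x :=
  stmt_3_general d ω α K hc hKsym hsym l hl
end

section
/- Let h(x) = Σ_{k ∈ K} h_k e^{i⟨k,ω⟩x} be a finite trigonometric sum with K ⊆ ℤ^d \ {0} symmetric and e^{i⟨k,ω⟩α} ≠ 1 for all k ∈ K. Suppose h satisfies h(-x-α) = -h(x) for all x, equivalently h_k = -h_{-k} e^{i⟨k,ω⟩α}. Then l(x) = Σ_{k ∈ K} (h_k/(e^{i⟨k,ω⟩α}-1)) e^{i⟨k,ω⟩x} is even: l(-x) = l(x) for all x ∈ ℝ. -/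
/-!
Reindexing `k ↦ -k` shows that a trigonometric sum over a symmetric frequency set is even as
soon as its coefficients are. With `e_k = exp (i⟨k,ω⟩α)` one has `e_{-k} = e_k⁻¹`, and the
antisymmetry `h_{-k} = -h_k e_k⁻¹` turns `h_{-k} / (e_{-k} - 1)` into `h_k / (e_k - 1)`.
-/

open Complex

theorem Finset.sum_comp_neg_of_neg_mem {G M : Type*} [AddGroup G] [AddCommMonoid M]
    {K : Finset G} (hK : ∀ k, k ∈ K ↔ -k ∈ K) (f : G → M) :
    ∑ k ∈ K, f (-k) = ∑ k ∈ K, f k :=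
  Finset.sum_equiv (Equiv.neg G) hK fun _ _ => rfl

theorem trigSum_neg_eq_of_coeff_neg {G : Type*} [AddGroup G] {K : Finset G}
    (hK : ∀ k, k ∈ K ↔ -k ∈ K) (θ : G → ℝ) (hθ : ∀ k, θ (-k) = -θ k) (c : G → ℂ)
    (hc : ∀ k ∈ K, c (-k) = c k) (x : ℝ) :
    ∑ k ∈ K, c k * exp (I * θ k * ((-x : ℝ) : ℂ)) = ∑ k ∈ K, c k * exp (I * θ k * x) := by
  rw [← Finset.sum_comp_neg_of_neg_mem hK]
  refine Finset.sum_congr rfl fun k hk => ?_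
  rw [hc k hk, hθ]
  push_cast
  ring_nf

theorem div_inv_sub_one_eq_of_eq_neg_mul {F : Type*} [Field F] {a b e : F}
    (he0 : e ≠ 0) (he1 : e ≠ 1) (hab : a = -b * e) :
    b / (e⁻¹ - 1) = a / (e - 1) := by
  have he1' : e - 1 ≠ 0 := sub_ne_zero.mpr he1
  have hinv : e⁻¹ - 1 ≠ 0 := by
    rwa [sub_ne_zero, Ne, inv_eq_one]
  rw [div_eq_div_iff hinv he1', hab]
  field_simp
  ring

theorem stmt_4_general (d : ℕ) (ω : Fin d → ℝ) (α : ℝ) (K : Finset (Fin d → ℤ))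
    (hc : (Fin d → ℤ) → ℂ)
    (hKsym : ∀ k, k ∈ K ↔ -k ∈ K)
    (hnr : ∀ k ∈ K,
      Complex.exp (Complex.I * ((∑ i, (k i : ℝ) * ω i : ℝ) : ℂ) * (α : ℂ)) ≠ 1)
    (hsym : ∀ k ∈ K, hc k =
      (-hc (-k)) * Complex.exp (Complex.I * ((∑ i, (k i : ℝ) * ω i : ℝ) : ℂ) * (α : ℂ)))
    (l : ℝ → ℂ)
    (hl : ∀ x : ℝ, l x = ∑ k ∈ K,
      hc k / (Complex.exp (Complex.I * ((∑ i, (k i : ℝ) * ω i : ℝ) : ℂ) * (α : ℂ)) - 1)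
        * Complex.exp (Complex.I * ((∑ i, (k i : ℝ) * ω i : ℝ) : ℂ) * (x : ℂ))) :
    ∀ x : ℝ, l (-x) = l x := by
  set θ : (Fin d → ℤ) → ℝ := fun k => ∑ i, (k i : ℝ) * ω i
  have hθ : ∀ k, θ (-k) = -θ k := fun k => by simp [θ, Finset.sum_neg_distrib]
  have hexp : ∀ k, exp (I * θ (-k) * α) = (exp (I * θ k * α))⁻¹ := fun k => by
    rw [hθ, ← exp_neg]; push_cast; ring_nf
  intro x
  rw [hl, hl]
  refine trigSum_neg_eq_of_coeff_neg hKsym θ hθ (fun k => hc k / (exp (I * θ k * α) - 1))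
    (fun k hk => ?_) x
  simp only [hexp]
  exact div_inv_sub_one_eq_of_eq_neg_mul (exp_ne_zero _) (hnr k hk) (hsym k hk)

theorem stmt_4 (d : ℕ) (ω : Fin d → ℝ) (α : ℝ) (K : Finset (Fin d → ℤ))
    (hc : (Fin d → ℤ) → ℂ)
    (hK0 : ∀ k ∈ K, k ≠ 0)
    (hKsym : ∀ k, k ∈ K ↔ -k ∈ K)
    (hnr : ∀ k ∈ K,
      Complex.exp (Complex.I * ((∑ i, (k i : ℝ) * ω i : ℝ) : ℂ) * (α : ℂ)) ≠ 1)
    (hsym : ∀ k ∈ K, hc k =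
      (-hc (-k)) * Complex.exp (Complex.I * ((∑ i, (k i : ℝ) * ω i : ℝ) : ℂ) * (α : ℂ)))
    (l : ℝ → ℂ)
    (hl : ∀ x : ℝ, l x = ∑ k ∈ K,
      hc k / (Complex.exp (Complex.I * ((∑ i, (k i : ℝ) * ω i : ℝ) : ℂ) * (α : ℂ)) - 1)
        * Complex.exp (Complex.I * ((∑ i, (k i : ℝ) * ω i : ℝ) : ℂ) * (x : ℂ))) :
    ∀ x : ℝ, l (-x) = l x :=
  stmt_4_general d ω α K hc hKsym hnr hsym l hl
end

section
/- Let φ : ℝ → ℝ be a bounded continuous odd function with lim_{x→+∞} φ(x) = φ(+∞) ∈ ℝ. Define J(ρ) = (1/(2πρ)) ∫_0^{2π} φ(ρ sin ξ) sin ξ dξ for ρ > 0. Then lim_{ρ→+∞} ρ J(ρ) = (2/π) φ(+∞). -/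
/-! Since `φ (ρ sin ξ) sin ξ → φ(+∞) |sin ξ|` pointwise as `ρ → ∞` (oddness supplies the limit
`-φ(+∞)` where `sin ξ < 0`), dominated convergence gives
`ρ J(ρ) → φ(+∞) / (2π) · ∫₀^{2π} |sin ξ| dξ = (2/π) φ(+∞)`. -/

open Filter Real MeasureTheory Topology

theorem integral_abs_sin_zero_pi : ∫ x in (0:ℝ)..π, |sin x| = 2 := by
  rw [intervalIntegral.integral_congr fun x hx =>
      abs_of_nonneg (sin_nonneg_of_nonneg_of_le_pi (Set.uIcc_of_le pi_nonneg ▸ hx).1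
        (Set.uIcc_of_le pi_nonneg ▸ hx).2),
    integral_sin, cos_zero, cos_pi]
  norm_num

theorem integral_abs_sin_zero_two_pi : ∫ x in (0:ℝ)..(2 * π), |sin x| = 4 := by
  have hint : ∀ a b : ℝ, IntervalIntegrable (fun x => |sin x|) volume a b := fun a b =>
    continuous_sin.abs.intervalIntegrable a b
  have hshift : ∫ x in π..(2 * π), |sin x| = ∫ x in (0:ℝ)..π, |sin x| := by
    simpa [sin_add_pi, two_mul] using
      (intervalIntegral.integral_comp_add_right (fun x => |sin x|) π (a := 0) (b := π)).symm
  rw [← intervalIntegral.integral_add_adjacent_intervals (hint 0 π) (hint π (2 * π)), hshift,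
    integral_abs_sin_zero_pi]
  norm_num

theorem Function.Odd.tendsto_atBot {β : Type*} [AddGroup β] [TopologicalSpace β] [ContinuousNeg β]
    {φ : ℝ → β} (hφ : φ.Odd) {L : β}
    (h : Tendsto φ atTop (𝓝 L)) : Tendsto φ atBot (𝓝 (-L)) := by
  have := (h.comp tendsto_neg_atBot_atTop).neg
  refine this.congr fun x => ?_
  simp [hφ x]

theorem tendsto_comp_mul_mul_self {φ : ℝ → ℝ} {L : ℝ} (htop : Tendsto φ atTop (𝓝 L))
    (hbot : Tendsto φ atBot (𝓝 (-L))) (s : ℝ) :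
    Tendsto (fun ρ => φ (ρ * s) * s) atTop (𝓝 (L * |s|)) := by
  rcases lt_trichotomy s 0 with hs | rfl | hs
  · rw [abs_of_neg hs, mul_neg, ← neg_mul]
    exact (hbot.comp (tendsto_id.atTop_mul_const_of_neg hs)).mul_const s
  · simp
  · rw [abs_of_pos hs]
    exact (htop.comp (tendsto_id.atTop_mul_const hs)).mul_const s

theorem tendsto_intervalIntegral_comp_mul_mul {φ g : ℝ → ℝ} {L C a b : ℝ}
    (hφ : Continuous φ) (hC : ∀ x, |φ x| ≤ C) (htop : Tendsto φ atTop (𝓝 L))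
    (hbot : Tendsto φ atBot (𝓝 (-L))) (hg : Continuous g) :
    Tendsto (fun ρ => ∫ x in a..b, φ (ρ * g x) * g x) atTop
      (𝓝 (L * ∫ x in a..b, |g x|)) := by
  rw [← intervalIntegral.integral_const_mul]
  refine intervalIntegral.tendsto_integral_filter_of_dominated_convergence (fun x => C * |g x|)
    (Eventually.of_forall fun ρ => ?_) (Eventually.of_forall fun ρ => ae_of_all _ fun x _ => ?_)
    ((continuous_const.mul hg.abs).intervalIntegrable a b)
    (ae_of_all _ fun x _ => tendsto_comp_mul_mul_self htop hbot (g x))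
  · exact ((hφ.comp (continuous_const.mul hg)).mul hg).aestronglyMeasurable
  · rw [Real.norm_eq_abs, abs_mul]
    exact mul_le_mul_of_nonneg_right (hC _) (abs_nonneg _)

open Filter Real in
theorem stmt_10 (φ : ℝ → ℝ) (hcont : Continuous φ)
    (hbdd : ∃ C : ℝ, ∀ x : ℝ, |φ x| ≤ C)
    (hodd : ∀ x : ℝ, φ (-x) = -φ x)
    (φinf : ℝ) (hlim : Tendsto φ atTop (nhds φinf))
    (J : ℝ → ℝ)
    (hJ : ∀ ρ : ℝ, 0 < ρ →
      J ρ = (1 / (2 * π * ρ)) * ∫ ξ in (0:ℝ)..(2 * π), φ (ρ * Real.sin ξ) * Real.sin ξ) :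
    Tendsto (fun ρ : ℝ => ρ * J ρ) atTop (nhds ((2 / π) * φinf)) := by
  obtain ⟨C, hC⟩ := hbdd
  have hint := (tendsto_intervalIntegral_comp_mul_mul hcont hC hlim
    (Function.Odd.tendsto_atBot hodd hlim) continuous_sin (a := 0) (b := 2 * π)).const_mul
    (1 / (2 * π))
  rw [integral_abs_sin_zero_two_pi,
    show 1 / (2 * π) * (φinf * 4) = 2 / π * φinf by field_simp; ring] at hint
  refine hint.congr' ?_
  filter_upwards [eventually_gt_atTop 0] with ρ hρ
  rw [hJ ρ hρ]
  field_simp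
end
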